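/- For every b > 0 and every n ∈ ℕ, the function φₙ satisfies the harmonic oscillator eigenvalue equation −φₙ''(x) + b² x² φₙ(x) = b(2n+1) φₙ(x) for all x ∈ ℝ. -/

import Mathlib

/-!
Differentiating Rodrigues' formula once more gives `Hₙ₊₁ = 2X Hₙ − Hₙ'`, hence `Hₙ₊₁' = 2(n+1) Hₙ`
and Hermite's equation `Hₙ'' = 2X Hₙ' − 2n Hₙ`. Since `(Q e^{−t²/2})' = (Q' − tQ) e^{−t²/2}`,
differentiating twice a function `Q e^{−t²/2}` with `Q` solving Hermite's equation with parameter
`μ` gives `(t² − 2μ − 1) Q e^{−t²/2}`; the substitution `t = √b x` turns this into the eigenvalue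
equation.
-/

open Real

/-- The `n`-th physicists' Hermite polynomial (as a function),
`Hₙ(x) = (−1)ⁿ e^{x²} (dⁿ/dxⁿ) e^{−x²}`. -/
noncomputable def physHermite (n : ℕ) (x : ℝ) : ℝ :=
  (-1 : ℝ) ^ n * Real.exp (x ^ 2) * iteratedDeriv n (fun y => Real.exp (-(y ^ 2))) x

/-- The Landau eigenfunctions
`φₙ(x) = aₙ b^{1/4} Hₙ(√b x) e^{−b x²/2}` with `aₙ = (2ⁿ n!)^{−1/2} π^{−1/4}`. -/
noncomputable def landauPhi (b : ℝ) (n : ℕ) (x : ℝ) : ℝ :=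
  (Real.sqrt (2 ^ n * Nat.factorial n))⁻¹ * (π ^ ((1 : ℝ) / 4))⁻¹ *
    b ^ ((1 : ℝ) / 4) * physHermite n (Real.sqrt b * x) * Real.exp (-(b * x ^ 2) / 2)

open Polynomial

noncomputable def physHermitePoly : ℕ → ℝ[X]
  | 0 => 1
  | n + 1 => 2 * X * physHermitePoly n - derivative (physHermitePoly n)

lemma physHermitePoly_succ (n : ℕ) :
    physHermitePoly (n + 1) = 2 * X * physHermitePoly n - derivative (physHermitePoly n) :=
  rfl

lemma derivative_physHermitePoly_succ (n : ℕ) :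
    derivative (physHermitePoly (n + 1)) = C (2 * (n + 1) : ℝ) * physHermitePoly n := by
  induction n with
  | zero => simp [physHermitePoly, C_ofNat]
  | succ m ih =>
    rw [physHermitePoly_succ (m + 1), derivative_sub, derivative_mul, derivative_mul, ih,
      derivative_C_mul, physHermitePoly_succ m]
    simp only [derivative_ofNat, derivative_X, map_mul, map_add, map_natCast, map_ofNat, map_one,
      Nat.cast_add, Nat.cast_one]
    ring

lemma derivative_derivative_physHermitePoly (n : ℕ) :
    derivative (derivative (physHermitePoly n)) =
      2 * X * derivative (physHermitePoly n) - C (2 * n : ℝ) * physHermitePoly n := by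
  cases n with
  | zero => simp [physHermitePoly]
  | succ m =>
    rw [derivative_physHermitePoly_succ, derivative_C_mul, physHermitePoly_succ m]
    simp only [map_mul, map_add, map_natCast, map_ofNat, map_one, Nat.cast_add, Nat.cast_one]
    ring

lemma iteratedDeriv_exp_neg_sq (n : ℕ) :
    iteratedDeriv n (fun y => exp (-(y ^ 2))) =
      fun x => (-1) ^ n * ((physHermitePoly n).eval x * exp (-(x ^ 2))) := by
  induction n with
  | zero => funext x; simp [physHermitePoly]
  | succ m ih =>
    rw [iteratedDeriv_succ, ih]
    funext x
    have hexp : HasDerivAt (fun y => exp (-(y ^ 2))) (exp (-(x ^ 2)) * -(2 * x)) x := by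
      simpa using ((hasDerivAt_pow 2 x).neg).exp
    have h : HasDerivAt (fun y => (-1) ^ m * ((physHermitePoly m).eval y * exp (-(y ^ 2)))) _ x :=
      (((physHermitePoly m).hasDerivAt x).mul hexp).const_mul _
    rw [h.deriv, physHermitePoly_succ]
    simp only [eval_sub, eval_mul, eval_ofNat, eval_X, pow_succ]
    ring

lemma physHermite_eq_eval (n : ℕ) (x : ℝ) : physHermite n x = (physHermitePoly n).eval x := by
  have hsign : ((-1 : ℝ) ^ n) * (-1) ^ n = 1 := by rw [← mul_pow]; norm_num
  have hexp : exp (x ^ 2) * exp (-(x ^ 2)) = 1 := by rw [← exp_add]; simp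
  rw [physHermite, iteratedDeriv_exp_neg_sq]
  linear_combination (physHermitePoly n).eval x * (exp (x ^ 2) * exp (-(x ^ 2)) * hsign + hexp)

noncomputable def polyMulGaussian (Q : ℝ[X]) (t : ℝ) : ℝ :=
  Q.eval t * exp (-(t ^ 2) / 2)

lemma polyMulGaussian_C_mul (c : ℝ) (Q : ℝ[X]) (t : ℝ) :
    polyMulGaussian (C c * Q) t = c * polyMulGaussian Q t := by
  simp only [polyMulGaussian, eval_mul, eval_C]; ring

lemma hasDerivAt_polyMulGaussian (Q : ℝ[X]) (t : ℝ) :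
    HasDerivAt (polyMulGaussian Q) (polyMulGaussian (derivative Q - X * Q) t) t := by
  have hexp : HasDerivAt (fun u => exp (-(u ^ 2) / 2)) (exp (-(t ^ 2) / 2) * -t) t := by
    have hsq : HasDerivAt (fun u : ℝ => -(u ^ 2) / 2) (-(2 * t) / 2) t := by
      simpa using ((hasDerivAt_pow 2 t).neg).div_const 2
    convert hsq.exp using 1
    ring
  refine ((Q.hasDerivAt t).mul hexp).congr_deriv ?_
  simp only [polyMulGaussian, eval_sub, eval_mul, eval_X]
  ring

lemma deriv_polyMulGaussian_comp_mul (Q : ℝ[X]) (s : ℝ) :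
    deriv (fun x => polyMulGaussian Q (s * x)) =
      fun x => polyMulGaussian (C s * (derivative Q - X * Q)) (s * x) := by
  funext x
  rw [deriv_comp_mul_left, (hasDerivAt_polyMulGaussian Q (s * x)).deriv, polyMulGaussian_C_mul,
    smul_eq_mul]

lemma derivative_sub_X_mul_twice_of_hermite_ode (Q : ℝ[X]) (μ : ℝ)
    (hQ : derivative (derivative Q) = 2 * X * derivative Q - C (2 * μ) * Q) :
    derivative (derivative Q - X * Q) - X * (derivative Q - X * Q) =
      (X ^ 2 - C (2 * μ + 1)) * Q := by
  simp only [derivative_sub, derivative_mul, derivative_X, hQ, map_add, map_mul, map_one]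
  ring

theorem polyMulGaussian_comp_mul_harmonic_oscillator (Q : ℝ[X]) (μ : ℝ)
    (hQ : derivative (derivative Q) = 2 * X * derivative Q - C (2 * μ) * Q) (s x : ℝ) :
    -(deriv (deriv fun x => polyMulGaussian Q (s * x)) x) +
        s ^ 4 * x ^ 2 * polyMulGaussian Q (s * x) =
      s ^ 2 * (2 * μ + 1) * polyMulGaussian Q (s * x) := by
  have hsecond : derivative (C s * (derivative Q - X * Q)) - X * (C s * (derivative Q - X * Q)) =
      C s * ((X ^ 2 - C (2 * μ + 1)) * Q) := by
    rw [← derivative_sub_X_mul_twice_of_hermite_ode Q μ hQ, derivative_C_mul]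
    ring
  rw [deriv_polyMulGaussian_comp_mul, deriv_polyMulGaussian_comp_mul, hsecond]
  simp only [polyMulGaussian, eval_mul, eval_sub, eval_pow, eval_X, eval_C]
  ring

/-- For every `b > 0` and `n ∈ ℕ`, the function `φₙ` satisfies the harmonic oscillator
eigenvalue equation `−φₙ'' + b² x² φₙ = b(2n+1) φₙ`. -/
theorem landauPhi_harmonic_oscillator (b : ℝ) (hb : 0 < b) (n : ℕ) (x : ℝ) :
    -(deriv (deriv (landauPhi b n)) x) + b ^ 2 * x ^ 2 * landauPhi b n x =
      b * (2 * n + 1) * landauPhi b n x := by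
  set c : ℝ := (sqrt (2 ^ n * n.factorial))⁻¹ * (π ^ ((1 : ℝ) / 4))⁻¹ * b ^ ((1 : ℝ) / 4)
  have hsq : sqrt b ^ 2 = b := sq_sqrt hb.le
  have hφ : landauPhi b n = fun x => polyMulGaussian (C c * physHermitePoly n) (sqrt b * x) := by
    funext y
    rw [landauPhi, physHermite_eq_eval, polyMulGaussian_C_mul, polyMulGaussian, mul_pow, hsq]
    ring
  have hode : derivative (derivative (C c * physHermitePoly n)) =
      2 * X * derivative (C c * physHermitePoly n) -
        C (2 * (n : ℝ)) * (C c * physHermitePoly n) := by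
    rw [derivative_C_mul, derivative_C_mul, derivative_derivative_physHermitePoly]
    ring
  have h := polyMulGaussian_comp_mul_harmonic_oscillator _ n hode (sqrt b) x
  rw [show sqrt b ^ 4 = (sqrt b ^ 2) ^ 2 by ring, hsq] at h
  rwa [hφ]
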